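/- For every box b = (i,j) in the Rothe diagram D(w) of w ∈ S_n, with r = r_{i,j}(w), the minor m_{[i-r,i],[j-r,j]} (with consecutive row interval [i-r,i] and column interval [j-r,j]) is an elusive minor whose southeast corner is b. -/

import Mathlib

/-- Rank function of a permutation: `rk w i j = #{a : 1 ≤ a ≤ i, w a ≤ j}`. -/
def rk (w : Equiv.Perm ℕ) (i j : ℕ) : ℕ :=
  ((Finset.Icc 1 i).filter (fun a => w a ≤ j)).card

/-- `(i,j)` is in the Rothe diagram `D(w)`. -/
def inRothe (w : Equiv.Perm ℕ) (i j : ℕ) : Prop :=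
  j < w i ∧ i < w.symm j

instance (w : Equiv.Perm ℕ) (i j : ℕ) : Decidable (inRothe w i j) := by
  unfold inRothe; infer_instance

/-- `(i,j)` is in Fulton's essential set `E(w)`. -/
def inEss (w : Equiv.Perm ℕ) (i j : ℕ) : Prop :=
  inRothe w i j ∧ ¬ inRothe w (i+1) j ∧ ¬ inRothe w i (j+1)

/-- The minor with row set `I` and column set `J` belongs to `(i,j) ∈ E(w)`. -/
def belongsTo (w : Equiv.Perm ℕ) (I J : Finset ℕ) (i j : ℕ) : Prop :=
  inEss w i j ∧ I ⊆ Finset.Icc 1 i ∧ J ⊆ Finset.Icc 1 j ∧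
    I.card = rk w i j + 1 ∧ J.card = rk w i j + 1

/-- The minor `m_{I,J}` attends `M^{[i',j']}`. -/
def attends (w : Equiv.Perm ℕ) (I J : Finset ℕ) (i' j' : ℕ) : Prop :=
  (rk w i' j' < (I ∩ Finset.Icc 1 i').card ∧ (J ∩ Finset.Icc 1 j').card = J.card) ∨
  ((I ∩ Finset.Icc 1 i').card = I.card ∧ rk w i' j' < (J ∩ Finset.Icc 1 j').card)

/-- The minor `m_{I,J}` belonging to `(i,j) ∈ E(w)` is elusive. -/
def elusive (w : Equiv.Perm ℕ) (I J : Finset ℕ) (i j : ℕ) : Prop :=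
  belongsTo w I J i j ∧
    ∀ i' j', inEss w i' j' → rk w i' j' < rk w i j → ¬ attends w I J i' j'

/-! Steps down or to the right inside `D(w)` do not change the rank, so walking from `(i, j)`
reaches an essential box `(a, b)` of rank `r`; the minor on the last `r + 1` rows of `[i]` and
columns of `[j]` belongs to it. If it attended an essential box `(i', j')` of smaller rank through
its rows, then `j ≤ j'` and hence `i' < i`; as `w i > j`, row `i` adds nothing to the rank, so
`r ≤ r_{i',j'} + (i - i' - 1)`, i.e. at most `r_{i',j'}` of the consecutive rows lie in `[i']`.
The column case is the same statement for `w⁻¹`. -/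

lemma Finset.max_Icc_of_le {α : Type*} [LinearOrder α] [LocallyFiniteOrder α] {a b : α}
    (h : a ≤ b) : (Finset.Icc a b).max = (b : WithBot α) :=
  le_antisymm (Finset.max_le fun _ hx => WithBot.coe_le_coe.mpr (Finset.mem_Icc.mp hx).2)
    (Finset.le_max (Finset.right_mem_Icc.mpr h))

section Rank

variable {w : Equiv.Perm ℕ} {i j i' j' : ℕ}

lemma rk_mono (hi : i ≤ i') (hj : j ≤ j') : rk w i j ≤ rk w i' j' := by
  apply Finset.card_le_card
  intro a ha
  simp only [Finset.mem_filter, Finset.mem_Icc] at ha ⊢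
  omega

lemma rk_succ_left (w : Equiv.Perm ℕ) (i j : ℕ) :
    rk w (i + 1) j = rk w i j + if w (i + 1) ≤ j then 1 else 0 := by
  unfold rk
  rw [← Order.succ_eq_add_one, ← Finset.insert_Icc_right_eq_Icc_succ (by simp),
    Finset.filter_insert]
  split_ifs <;> simp

lemma rk_add_left_le (w : Equiv.Perm ℕ) (i k j : ℕ) : rk w (i + k) j ≤ rk w i j + k := by
  induction k with
  | zero => simp
  | succ k ih => rw [← add_assoc, rk_succ_left]; split_ifs <;> omega

/-- The row `i` itself does not count when `w i > j`. -/
lemma rk_add_lt_of_lt_apply (hji : j < w i) (hi : i' < i) : rk w i j + i' < rk w i' j + i := by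
  obtain ⟨k, rfl⟩ := Nat.exists_eq_add_of_lt hi
  have := rk_add_left_le w i' k j
  rw [rk_succ_left, if_neg (not_le.mpr hji)]
  omega

lemma rk_lt_left (h0 : w 0 = 0) (hji : j < w i) : rk w i j < i := by
  have hi : 0 < i := Nat.pos_of_ne_zero fun h => by simp [h, h0] at hji
  simpa [rk] using rk_add_lt_of_lt_apply hji hi

lemma rk_symm (h0 : w 0 = 0) (i j : ℕ) : rk w.symm j i = rk w i j := by
  have hs0 : w.symm 0 = 0 := by rw [Equiv.symm_apply_eq, h0]
  refine Finset.card_nbij' w.symm w ?_ ?_ (fun a _ => w.apply_symm_apply a)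
    (fun a _ => w.symm_apply_apply a)
  · intro b hb
    simp only [Finset.coe_filter, Finset.mem_Icc, Set.mem_ofPred_eq,
      Equiv.apply_symm_apply] at hb ⊢
    have : w.symm b ≠ 0 := fun h => by rw [← hs0, w.symm.injective.eq_iff] at h; omega
    omega
  · intro a ha
    simp only [Finset.coe_filter, Finset.mem_Icc, Set.mem_ofPred_eq,
      Equiv.symm_apply_apply] at ha ⊢
    have : w a ≠ 0 := fun h => by rw [← h0, w.injective.eq_iff] at h; omega
    omega

lemma rk_lt_right (h0 : w 0 = 0) (hij : i < w.symm j) : rk w i j < j := by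
  rw [← rk_symm h0]
  exact rk_lt_left (by rw [Equiv.symm_apply_eq, h0]) hij

lemma rk_succ_right_of_lt (h0 : w 0 = 0) (hij : i < w.symm (j + 1)) :
    rk w i (j + 1) = rk w i j := by
  rw [← rk_symm h0, ← rk_symm h0, rk_succ_left, if_neg (not_le.mpr hij), add_zero]

end Rank

section Diagram

variable {n : ℕ} {w : Equiv.Perm ℕ} {i j : ℕ}

lemma inRothe_symm_iff : inRothe w.symm j i ↔ inRothe w i j := by
  simp [inRothe, and_comm]

lemma le_of_inRothe (hw : ∀ a, a ∉ Finset.Icc 1 n → w a = a) (h : inRothe w i j) :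
    i ≤ n := by
  obtain ⟨hji, hij⟩ := h
  by_contra hin
  have hwi : w i = i := hw i (by simp; omega)
  have hwk := hw (w.symm j) (by simp; omega)
  rw [Equiv.apply_symm_apply] at hwk
  omega

lemma le_of_inRothe' (hw : ∀ a, a ∉ Finset.Icc 1 n → w a = a) (h : inRothe w i j) : j ≤ n :=
  le_of_inRothe (w := w.symm) (fun a ha => by rw [Equiv.symm_apply_eq, hw a ha])
    (inRothe_symm_iff.mpr h)

/-- Among the boxes of `D(w)` weakly southeast of `(i, j)` with the same rank, one maximising
`a + b` is essential, since rank does not change along a step inside `D(w)`. -/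
lemma exists_inEss_rk_eq (hw : ∀ a, a ∉ Finset.Icc 1 n → w a = a) (h : inRothe w i j) :
    ∃ a b, inEss w a b ∧ i ≤ a ∧ j ≤ b ∧ rk w a b = rk w i j := by
  have h0 : w 0 = 0 := hw 0 (by simp)
  let S := (Finset.range (n + 1) ×ˢ Finset.range (n + 1)).filter
    fun p : ℕ × ℕ => inRothe w p.1 p.2 ∧ i ≤ p.1 ∧ j ≤ p.2 ∧ rk w p.1 p.2 = rk w i j
  have mem_S {a b : ℕ} (hab : inRothe w a b) :
      (a, b) ∈ S ↔ i ≤ a ∧ j ≤ b ∧ rk w a b = rk w i j := by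
    simp [S, hab, le_of_inRothe hw hab, le_of_inRothe' hw hab]
  have hS : S.Nonempty := ⟨(i, j), (mem_S h).mpr ⟨le_rfl, le_rfl, rfl⟩⟩
  obtain ⟨⟨a, b⟩, hab, hmax⟩ := S.exists_max_image (fun p => p.1 + p.2) hS
  have hab' : inRothe w a b := (Finset.mem_filter.mp hab).2.1
  obtain ⟨hia, hjb, hrk⟩ := (mem_S hab').mp hab
  refine ⟨a, b, ⟨hab', fun hdown => ?_, fun hright => ?_⟩, hia, hjb, hrk⟩
  · have := hmax (a + 1, b) <| (mem_S hdown).mpr ⟨by omega, hjb, by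
      rw [rk_succ_left, if_neg (not_le.mpr hdown.1), hrk, add_zero]⟩
    omega
  · have := hmax (a, b + 1) <| (mem_S hright).mpr ⟨hia, by omega, by
      rw [rk_succ_right_of_lt h0 hright.2, hrk]⟩
    omega

end Diagram

section Minor

variable {w : Equiv.Perm ℕ} {i j i' j' : ℕ}

lemma Finset.subset_of_card_inter_eq {α : Type*} [DecidableEq α] {s t : Finset α}
    (h : (s ∩ t).card = s.card) : s ⊆ t :=
  Finset.inter_eq_left.mp (Finset.eq_of_subset_of_card_le Finset.inter_subset_left h.ge)

lemma card_Icc_rk_inter_le (hji : j < w i) (hj : j ≤ j') (hlt : rk w i' j' < rk w i j) :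
    (Finset.Icc (i - rk w i j) i ∩ Finset.Icc 1 i').card ≤ rk w i' j' := by
  have hi : i' < i := lt_of_not_ge fun hi => (rk_mono hi hj).not_gt hlt
  have hgap := rk_add_lt_of_lt_apply hji hi
  have hmono : rk w i' j ≤ rk w i' j' := rk_mono le_rfl hj
  have hsub : Finset.Icc (i - rk w i j) i ∩ Finset.Icc 1 i' ⊆ Finset.Icc (i - rk w i j) i' :=
    fun x hx => by simp only [Finset.mem_inter, Finset.mem_Icc] at hx ⊢; omega
  have := Finset.card_le_card hsub
  rw [Nat.card_Icc] at this
  omega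

lemma card_Icc_rk_inter_le' (h0 : w 0 = 0) (hij : i < w.symm j) (hi : i ≤ i')
    (hlt : rk w i' j' < rk w i j) :
    (Finset.Icc (j - rk w i j) j ∩ Finset.Icc 1 j').card ≤ rk w i' j' := by
  simp only [← rk_symm h0] at hlt ⊢
  exact card_Icc_rk_inter_le hij hi hlt

lemma not_attends_consecutive (h0 : w 0 = 0) (hb : inRothe w i j) (hlt : rk w i' j' < rk w i j) :
    ¬ attends w (Finset.Icc (i - rk w i j) i) (Finset.Icc (j - rk w i j) j) i' j' := by
  rintro (⟨hrows, hcols⟩ | ⟨hrows, hcols⟩)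
  · have hj : j ≤ j' := (Finset.mem_Icc.mp (Finset.subset_of_card_inter_eq hcols
      (Finset.right_mem_Icc.mpr (Nat.sub_le j _)))).2
    exact (card_Icc_rk_inter_le hb.1 hj hlt).not_gt hrows
  · have hi : i ≤ i' := (Finset.mem_Icc.mp (Finset.subset_of_card_inter_eq hrows
      (Finset.right_mem_Icc.mpr (Nat.sub_le i _)))).2
    exact (card_Icc_rk_inter_le' h0 hb.2 hi hlt).not_gt hcols

end Minor

/-- Proposition 2.2: for b = (i,j) ∈ D(w) with r = r_{i,j}(w),
the minor with consecutive rows [i-r,i] and columns [j-r,j] is elusive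
(belonging to some essential box), and its southeast corner is b. -/
theorem consecutive_minor_elusive (n : ℕ) (w : Equiv.Perm ℕ)
    (hw : ∀ a, a ∉ Finset.Icc 1 n → w a = a)
    (i j r : ℕ) (hb : inRothe w i j) (hr : r = rk w i j) :
    (∃ a b : ℕ, elusive w (Finset.Icc (i-r) i) (Finset.Icc (j-r) j) a b) ∧
    (Finset.Icc (i-r) i).max = (i : WithBot ℕ) ∧
    (Finset.Icc (j-r) j).max = (j : WithBot ℕ) := by
  subst hr
  have h0 : w 0 = 0 := hw 0 (by simp)
  have hri := rk_lt_left h0 hb.1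
  have hrj := rk_lt_right h0 hb.2
  obtain ⟨a, b, hess, hia, hjb, hrk⟩ := exists_inEss_rk_eq hw hb
  have hbelongs : belongsTo w (Finset.Icc (i - rk w i j) i) (Finset.Icc (j - rk w i j) j) a b :=
    ⟨hess, Finset.Icc_subset_Icc (by omega) hia, Finset.Icc_subset_Icc (by omega) hjb,
      by rw [Nat.card_Icc, hrk]; omega, by rw [Nat.card_Icc, hrk]; omega⟩
  refine ⟨⟨a, b, hbelongs, fun i' j' _ hlt => not_attends_consecutive h0 hb (hrk ▸ hlt)⟩,
    Finset.max_Icc_of_le (Nat.sub_le i _), Finset.max_Icc_of_le (Nat.sub_le j _)⟩
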